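/- Let k ≥ 1 be an integer and let λ = (λ_1 ≥ λ_2 ≥ ⋯ ≥ λ_l) be a partition with l ≥ 2 that generates all k-partitions of n = Σ_{j=1}^l λ_j. Then (λ_2, λ_3, …, λ_l) generates all k-partitions of n − λ_1. -/

import Mathlib

/-- A partition of `n`: a multiset of positive integers summing to `n`. -/
def IsPartition (n : ℕ) (lam : Multiset ℕ) : Prop :=
  (∀ x ∈ lam, 0 < x) ∧ lam.sum = n

/-- `μ` generates `lam`: `μ` decomposes into disjoint sub-multisets, one summing
to each part of `lam`. -/
def Generates (μ lam : Multiset ℕ) : Prop :=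
  ∃ P : Multiset (Multiset ℕ), P.sum = μ ∧ P.map Multiset.sum = lam

/-- `μ` generates all partitions of `n` with at most `k` parts. -/
def GeneratesAll (n k : ℕ) (μ : Multiset ℕ) : Prop :=
  ∀ lam : Multiset ℕ, IsPartition n lam → Multiset.card lam ≤ k → Generates μ lam

/-- The greedy partition: repeatedly take `⌈remainder / k⌉`. -/
def greedyList (k : ℕ) : ℕ → List ℕ
  | 0 => []
  | (n + 1) =>
    if hk : k = 0 then []
    else (n + k) / k :: greedyList k (n + 1 - (n + k) / k)
  termination_by n => n
  decreasing_by
    have h1 : 1 ≤ (n + k) / k :=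
      (Nat.one_le_div_iff (Nat.pos_of_ne_zero hk)).mpr (Nat.le_add_left k n)
    omega

/-- The greedy condition over every split of the list. -/
def Cond (k : ℕ) (l : List ℕ) : Prop :=
  ∀ pre b suf, l = pre ++ b :: suf → b * k ≤ b + suf.sum + (k - 1)

lemma cond_tail {k a : ℕ} {l : List ℕ} (h : Cond k (a :: l)) : Cond k l := by
  intro pre b suf hs
  exact h (a :: pre) b suf (by simp [hs])

lemma cond_head {k a : ℕ} {l : List ℕ} (h : Cond k (a :: l)) :
    a * k ≤ a + l.sum + (k - 1) := h [] a l rfl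

lemma msum_le {s t : Multiset ℕ} (h : s ≤ t) : s.sum ≤ t.sum := by
  obtain ⟨u, rfl⟩ := Multiset.le_iff_exists_add.mp h
  rw [Multiset.sum_add]
  omega

/-- One can chunk `x` into at most `k'` positive parts each at most `q`. -/
lemma chunk_exists : ∀ (k' x q : ℕ), 0 < q → x ≤ k' * q →
    ∃ c : Multiset ℕ, c.sum = x ∧ Multiset.card c ≤ k' ∧ ∀ y ∈ c, 0 < y ∧ y ≤ q := by
  intro k'
  induction k' with
  | zero =>
    intro x q hq hx
    have hx0 : x = 0 := by omega
    exact ⟨0, by simp [hx0], by simp, by simp⟩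
  | succ k ih =>
    intro x q hq hx
    by_cases hle : x ≤ q
    · by_cases hx0 : x = 0
      · exact ⟨0, by simp [hx0], by simp, by simp⟩
      · exact ⟨{x}, by simp, by simp, by intro y hy; simp at hy; omega⟩
    · have hx' : x - q ≤ k * q := by
        have : (k + 1) * q = k * q + q := by ring
        omega
      obtain ⟨c, hc1, hc2, hc3⟩ := ih (x - q) q hq hx'
      refine ⟨q ::ₘ c, by rw [Multiset.sum_cons, hc1]; omega, by simpa using hc2, ?_⟩
      intro y hy
      rcases Multiset.mem_cons.mp hy with h | h
      · omega
      · exact hc3 y h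

/-- Sum of elements exceeding `q` is at most the sum of block-sums exceeding `q`. -/
lemma filter_sum_le (q : ℕ) (P : Multiset (Multiset ℕ)) :
    (P.sum.filter (fun x => q < x)).sum ≤
      ((P.map Multiset.sum).filter (fun x => q < x)).sum := by
  induction P using Multiset.induction_on with
  | empty => simp
  | cons b P ih =>
    rw [Multiset.sum_cons, Multiset.filter_add, Multiset.sum_add,
      Multiset.map_cons, Multiset.filter_cons]
    by_cases hb : q < b.sum
    · simp only [if_pos hb]
      have h1 : (b.filter (fun x => q < x)).sum ≤ b.sum :=
        msum_le (Multiset.filter_le _ b)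
      rw [Multiset.sum_add, Multiset.sum_singleton]
      omega
    · simp only [if_neg hb]
      have h0 : b.filter (fun x => q < x) = 0 := by
        apply Multiset.filter_eq_nil.mpr
        intro a ha
        have := Multiset.single_le_sum (fun y _ => Nat.zero_le y) a ha
        omega
      rw [h0]
      simpa using ih

/-- Forward direction: generating all `k`-partitions forces the greedy condition. -/
lemma cond_of_generatesAll (k : ℕ) (hk : 1 ≤ k) (μ : List ℕ)
    (hsorted : μ.Pairwise (· ≥ ·)) (hpos : ∀ x ∈ μ, 0 < x)
    (hgen : GeneratesAll μ.sum k (↑μ : Multiset ℕ)) : Cond k μ := by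
  intro pre b suf heq
  by_contra hcon
  push_neg at hcon
  have hk0 : 0 < k := hk
  set s := pre.sum with hs
  set rem := b + suf.sum with hrem
  have hb1 : 0 < b := hpos b (by rw [heq]; simp)
  set q := (rem + k - 1) / k with hq
  have hdm := Nat.div_add_mod (rem + k - 1) k
  rw [← hq] at hdm
  have hmod : (rem + k - 1) % k < k := Nat.mod_lt _ hk0
  have hbq : q < b := by
    rw [hq]
    rw [Nat.div_lt_iff_lt_mul hk0]
    omega
  have hq1 : 1 ≤ q := by
    rw [hq]
    rw [Nat.one_le_div_iff hk0]
    omega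
  have hqrem : q < rem := by omega
  have hsplit : (k - 1) * q + q = k * q := by
    have h : k - 1 + 1 = k := by omega
    calc (k - 1) * q + q = ((k - 1) + 1) * q := by ring
      _ = k * q := by rw [h]
  have hxb : rem - q ≤ (k - 1) * q := by omega
  obtain ⟨c, hc1, hc2, hc3⟩ := chunk_exists (k - 1) (rem - q) q (by omega) hxb
  set lam : Multiset ℕ := (s + q) ::ₘ c with hlam
  have hsum : μ.sum = s + rem := by
    have : μ.sum = pre.sum + (b + suf.sum) := by rw [heq]; simp
    omega
  have hpart : IsPartition μ.sum lam := by
    constructor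
    · intro x hx
      rcases Multiset.mem_cons.mp hx with h | h
      · omega
      · exact (hc3 x h).1
    · rw [hlam, Multiset.sum_cons, hc1, hsum]; omega
  have hcard : Multiset.card lam ≤ k := by
    rw [hlam, Multiset.card_cons]
    omega
  obtain ⟨P, hP1, hP2⟩ := hgen lam hpart hcard
  have hA := filter_sum_le q P
  rw [hP1, hP2] at hA
  -- upper bound
  have hupper : (lam.filter (fun x => q < x)).sum ≤ s + q := by
    rw [hlam, Multiset.filter_cons]
    have h0 : c.filter (fun x => q < x) = 0 := by
      apply Multiset.filter_eq_nil.mpr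
      intro y hy
      have := (hc3 y hy).2
      omega
    rw [h0, add_zero]
    split_ifs with h
    · simp
    · simp
  -- lower bound
  have hlower : s + b ≤ ((↑μ : Multiset ℕ).filter (fun x => q < x)).sum := by
    have hμ : (↑μ : Multiset ℕ) = ↑pre + (b ::ₘ ↑suf) := by
      rw [heq]; simp
    rw [hμ, Multiset.filter_add, Multiset.sum_add]
    have hpre : (↑pre : Multiset ℕ).filter (fun x => q < x) = ↑pre := by
      apply Multiset.filter_eq_self.mpr
      intro x hx
      have hx' : x ∈ pre := by simpa using hx
      have hge : x ≥ b := by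
        have hp := hsorted
        rw [heq] at hp
        have := (List.pairwise_append.mp hp).2.2
        exact this x hx' b (by simp)
      omega
    rw [hpre, Multiset.filter_cons, if_pos hbq, Multiset.sum_add,
      Multiset.sum_singleton]
    have hps : (↑pre : Multiset ℕ).sum = s := by simp [hs]
    omega
  omega

/-- Backward direction: the greedy condition implies generating all `k`-partitions. -/
lemma generatesAll_of_cond (k : ℕ) (hk : 1 ≤ k) :
    ∀ μ : List ℕ, (∀ x ∈ μ, 0 < x) → Cond k μ →
      GeneratesAll μ.sum k (↑μ : Multiset ℕ) := by
  intro μ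
  induction μ with
  | nil =>
    intro _ _ lam hpart hcard
    have hlam : lam = 0 := by
      rcases hpart with ⟨hp, hsum⟩
      by_contra h
      obtain ⟨x, hx⟩ := Multiset.exists_mem_of_ne_zero h
      have h1 := Multiset.single_le_sum (fun y _ => Nat.zero_le y) x hx
      have h2 := hp x hx
      simp at hsum
      omega
    exact ⟨0, by simp, by simp [hlam]⟩
  | cons a l ih =>
    intro hpos hcond lam hpart hcard
    obtain ⟨hlpos, hlsum⟩ := hpart
    have hsum : lam.sum = a + l.sum := by simpa using hlsum
    have ha1 : 0 < a := hpos a (by simp)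
    have hhead := cond_head hcond
    have hex : ∃ m ∈ lam, a ≤ m := by
      by_contra h
      push_neg at h
      have hb : ∀ x ∈ lam, x ≤ a - 1 := by
        intro x hx
        have := h x hx
        omega
      have h1 : lam.sum ≤ Multiset.card lam * (a - 1) := by
        have := Multiset.sum_le_card_nsmul lam (a - 1) hb
        simpa using this
      have h2 : Multiset.card lam * (a - 1) ≤ k * (a - 1) :=
        Nat.mul_le_mul_right _ hcard
      have h3 : k * (a - 1) + k = k * a := by
        have hh : a - 1 + 1 = a := by omega
        calc k * (a - 1) + k = k * ((a - 1) + 1) := by ring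
          _ = k * a := by rw [hh]
      have h4 : a * k = k * a := Nat.mul_comm a k
      omega
    obtain ⟨m, hm, ham⟩ := hex
    have hlam_eq : m ::ₘ lam.erase m = lam := Multiset.cons_erase hm
    have herase_sum : (lam.erase m).sum + m = a + l.sum := by
      have h := congrArg Multiset.sum hlam_eq
      rw [Multiset.sum_cons] at h
      omega
    have herase_pos : ∀ x ∈ lam.erase m, 0 < x :=
      fun x hx => hlpos x (Multiset.mem_of_mem_erase hx)
    have herase_card : Multiset.card (lam.erase m) + 1 = Multiset.card lam := by
      have h := congrArg Multiset.card hlam_eq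
      rw [Multiset.card_cons] at h
      omega
    have hcondl : Cond k l := cond_tail hcond
    rcases Nat.eq_or_lt_of_le ham with haeq | halt
    · -- a = m : use {a} as its own block
      have hpart' : IsPartition l.sum (lam.erase m) := ⟨herase_pos, by omega⟩
      obtain ⟨P, hP1, hP2⟩ := ih (fun x hx => hpos x (by simp [hx])) hcondl
        (lam.erase m) hpart' (by omega)
      refine ⟨({a} : Multiset ℕ) ::ₘ P, ?_, ?_⟩
      · rw [Multiset.sum_cons, hP1]
        simp
      · rw [Multiset.map_cons, hP2, Multiset.sum_singleton, haeq, hlam_eq]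
    · -- a < m : add a to a block summing to m - a
      have hpart' : IsPartition l.sum ((m - a) ::ₘ lam.erase m) := by
        constructor
        · intro x hx
          rcases Multiset.mem_cons.mp hx with h | h
          · omega
          · exact herase_pos x h
        · rw [Multiset.sum_cons]; omega
      obtain ⟨P, hP1, hP2⟩ := ih (fun x hx => hpos x (by simp [hx])) hcondl
        ((m - a) ::ₘ lam.erase m) hpart' (by rw [Multiset.card_cons]; omega)
      have hmem : (m - a) ∈ P.map Multiset.sum := by
        rw [hP2]; exact Multiset.mem_cons_self _ _
      obtain ⟨bset, hbmem, hbsum⟩ := Multiset.mem_map.mp hmem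
      obtain ⟨Q, hQ⟩ := Multiset.exists_cons_of_mem hbmem
      have hQmap : Q.map Multiset.sum = lam.erase m := by
        have h : Multiset.sum bset ::ₘ Q.map Multiset.sum = (m - a) ::ₘ lam.erase m := by
          rw [← Multiset.map_cons, ← hQ, hP2]
        rw [hbsum] at h
        exact (Multiset.cons_inj_right _).mp h
      refine ⟨(a ::ₘ bset) ::ₘ Q, ?_, ?_⟩
      · rw [Multiset.sum_cons, Multiset.cons_add]
        have h : bset + Q.sum = ↑l := by rw [← Multiset.sum_cons, ← hQ, hP1]
        rw [h]
        simp
      · rw [Multiset.map_cons, hQmap, Multiset.sum_cons, hbsum]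
        have h : a + (m - a) = m := by omega
        rw [h, hlam_eq]

/-- if `lam = (λ_1 ≥ λ_2 ≥ ⋯ ≥ λ_l)`, `l ≥ 2`, generates all
`k`-partitions of `n = Σ λ_j`, then `(λ_2, …, λ_l)` generates all
`k`-partitions of `n - λ_1`. -/
theorem tail_generatesAll (k : ℕ) (hk : 1 ≤ k)
    (a : ℕ) (rest : List ℕ)
    (hsorted : (a :: rest).Pairwise (· ≥ ·)) (hpos : ∀ x ∈ a :: rest, 0 < x)
    (hlen : 2 ≤ (a :: rest).length)
    (hgen : GeneratesAll (a :: rest).sum k (↑(a :: rest) : Multiset ℕ)) :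
    GeneratesAll ((a :: rest).sum - a) k (↑rest : Multiset ℕ) := by
  have hcond : Cond k (a :: rest) :=
    cond_of_generatesAll k hk (a :: rest) hsorted hpos hgen
  have hcondr : Cond k rest := cond_tail hcond
  have hrpos : ∀ x ∈ rest, 0 < x := fun x hx => hpos x (by simp [hx])
  have hres := generatesAll_of_cond k hk rest hrpos hcondr
  have heq : (a :: rest).sum - a = rest.sum := by simp
  rw [heq]
  exact hres
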